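/- arXiv:1005.0455 — 2 statements merged into one kernel-verified Lean document; each statement's English description precedes it below -/
import Mathlib

section
/- Let f:[a,b]×[c,d]→ℝ be continuous with mixed partial derivative f_{xy} = ∂²f/∂x∂y existing on (a,b)×(c,d) and bounded by M. Then for all (x,y) ∈ [a,b]×[c,d], |∫_a^b∫_c^d f(s,t)dt ds + (d-c)(b-a)f(x,y) - [(b-a)∫_c^d f(x,t)dt + (d-c)∫_a^b f(s,y)ds]| ≤ [(b-a)²/4 + (x-(a+b)/2)²]·[(d-c)²/4 + (y-(c+d)/2)²]·M. -/
/-!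
The integrand to look at is the mixed difference `f s t - f x t - f s y + f x y`: its integral
over the rectangle is exactly the expression inside the absolute value. Two applications of the
mean value theorem, first in `t` to `fx u t - fx u y` and then in `s`, bound it by
`M * |s - x| * |t - y|` on the open rectangle, and continuity carries the bound to the closed one.
Integrating gives the product of `∫ s in a..b, |s - x| = (b - a) ^ 2 / 4 + (x - (a + b) / 2) ^ 2`
and its analogue in `t`.
-/

open Set MeasureTheory intervalIntegral Function

lemma abs_sub_le_of_hasDerivAt {S : Set ℝ} (hS : Convex ℝ S) {g g' : ℝ → ℝ} {C : ℝ}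
    (hg : ∀ u ∈ S, HasDerivAt g (g' u) u) (hC : ∀ u ∈ S, |g' u| ≤ C)
    {u v : ℝ} (hu : u ∈ S) (hv : v ∈ S) : |g v - g u| ≤ C * |v - u| := by
  simpa only [Real.norm_eq_abs] using hS.norm_image_sub_le_of_norm_hasDerivWithin_le
    (fun w hw => (hg w hw).hasDerivWithinAt) (by simpa only [Real.norm_eq_abs] using hC) hu hv

lemma integral_abs_sub_of_mem_Icc {c d y : ℝ} (hy : y ∈ Icc c d) :
    ∫ t in c..d, |t - y| = (d - c) ^ 2 / 4 + (y - (c + d) / 2) ^ 2 := by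
  have hint : ∀ p q : ℝ, IntervalIntegrable (fun t => |t - y|) volume p q := fun p q =>
    (by fun_prop : Continuous fun t => |t - y|).intervalIntegrable p q
  have left : ∫ t in c..y, |t - y| = (y - c) ^ 2 / 2 := by
    rw [integral_congr (g := fun t => y - t) fun t ht => by
      rw [uIcc_of_le hy.1] at ht
      rw [abs_of_nonpos (by linarith [ht.2]), neg_sub]]
    simp [integral_comp_sub_left (fun t => t)]
  have right : ∫ t in y..d, |t - y| = (d - y) ^ 2 / 2 := by
    rw [integral_congr (g := fun t => t - y) fun t ht => by
      rw [uIcc_of_le hy.2] at ht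
      rw [abs_of_nonneg (by linarith [ht.1])]]
    simp [integral_comp_sub_right (fun t => t)]
  rw [← integral_add_adjacent_intervals (hint c y) (hint y d), left, right]
  ring

lemma abs_integral_integral_le_mul {g : ℝ → ℝ → ℝ} {u v : ℝ → ℝ} {a b c d : ℝ} (hab : a ≤ b)
    (hcd : c ≤ d) (hu : IntervalIntegrable u volume a b) (hv : IntervalIntegrable v volume c d)
    (h : ∀ s ∈ Icc a b, ∀ t ∈ Icc c d, |g s t| ≤ u s * v t) :
    |∫ s in a..b, ∫ t in c..d, g s t| ≤ (∫ s in a..b, u s) * ∫ t in c..d, v t := by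
  have hinner : ∀ s ∈ Ioc a b, ‖∫ t in c..d, g s t‖ ≤ u s * ∫ t in c..d, v t := fun s hs =>
    (norm_integral_le_of_norm_le hcd (ae_of_all _ fun t ht =>
        h s (Ioc_subset_Icc_self hs) t (Ioc_subset_Icc_self ht)) (hv.const_mul (u s))).trans_eq
      (integral_const_mul _ _)
  exact (norm_integral_le_of_norm_le hab (ae_of_all _ hinner) (hu.mul_const _)).trans_eq
    (integral_mul_const _ _)

lemma exists_continuous_eq_on_Icc_prod {f : ℝ → ℝ → ℝ} {a b c d : ℝ} (hab : a ≤ b) (hcd : c ≤ d)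
    (hf : ContinuousOn (uncurry f) (Icc a b ×ˢ Icc c d)) :
    ∃ F : ℝ → ℝ → ℝ, Continuous (uncurry F) ∧ ∀ s ∈ Icc a b, ∀ t ∈ Icc c d, F s t = f s t :=
  ⟨fun s t => f (projIcc a b hab s) (projIcc c d hcd t),
    hf.comp_continuous
      (f := fun p : ℝ × ℝ => ((projIcc a b hab p.1 : ℝ), (projIcc c d hcd p.2 : ℝ))) (by fun_prop)
      fun p => ⟨(projIcc a b hab p.1).2, (projIcc c d hcd p.2).2⟩,
    fun s hs t ht => by simp [projIcc_of_mem _ hs, projIcc_of_mem _ ht]⟩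

def mixedDiff (f : ℝ → ℝ → ℝ) (x y s t : ℝ) : ℝ := f s t - f x t - f s y + f x y

lemma abs_mixedDiff_le_of_hasDerivAt {f fx fxy : ℝ → ℝ → ℝ} {a b c d M : ℝ}
    (hfx : ∀ x ∈ Ioo a b, ∀ y ∈ Ioo c d, HasDerivAt (fun t => f t y) (fx x y) x)
    (hfxy : ∀ x ∈ Ioo a b, ∀ y ∈ Ioo c d, HasDerivAt (fun s => fx x s) (fxy x y) y)
    (hM : ∀ x ∈ Ioo a b, ∀ y ∈ Ioo c d, |fxy x y| ≤ M)
    {x s y t : ℝ} (hx : x ∈ Ioo a b) (hs : s ∈ Ioo a b) (hy : y ∈ Ioo c d) (ht : t ∈ Ioo c d) :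
    |mixedDiff f x y s t| ≤ M * |s - x| * |t - y| := by
  have hfx_sub : ∀ u ∈ Ioo a b, |fx u t - fx u y| ≤ M * |t - y| := fun u hu =>
    abs_sub_le_of_hasDerivAt (convex_Ioo c d) (hfxy u hu) (hM u hu) hy ht
  have hdiff : ∀ u ∈ Ioo a b, HasDerivAt (fun v => f v t - f v y) (fx u t - fx u y) u :=
    fun u hu => (hfx u hu t ht).sub (hfx u hu y hy)
  calc |mixedDiff f x y s t| = |(f s t - f s y) - (f x t - f x y)| := by
        rw [mixedDiff]; ring_nf
    _ ≤ M * |t - y| * |s - x| := abs_sub_le_of_hasDerivAt (convex_Ioo a b) hdiff hfx_sub hx hs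
    _ = M * |s - x| * |t - y| := by ring

lemma abs_mixedDiff_le_of_continuousOn {f : ℝ → ℝ → ℝ} {a b c d M : ℝ} (hab : a < b) (hcd : c < d)
    (hf : ContinuousOn (uncurry f) (Icc a b ×ˢ Icc c d))
    (h : ∀ x ∈ Ioo a b, ∀ s ∈ Ioo a b, ∀ y ∈ Ioo c d, ∀ t ∈ Ioo c d,
      |mixedDiff f x y s t| ≤ M * |s - x| * |t - y|)
    {x s y t : ℝ} (hx : x ∈ Icc a b) (hs : s ∈ Icc a b) (hy : y ∈ Icc c d) (ht : t ∈ Icc c d) :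
    |mixedDiff f x y s t| ≤ M * |s - x| * |t - y| := by
  obtain ⟨F, hF, hFf⟩ := exists_continuous_eq_on_Icc_prod hab.le hcd.le hf
  have hmixed : ∀ x ∈ Icc a b, ∀ s ∈ Icc a b, ∀ y ∈ Icc c d, ∀ t ∈ Icc c d,
      mixedDiff F x y s t = mixedDiff f x y s t := fun x hx s hs y hy t ht => by
    rw [mixedDiff, mixedDiff, hFf x hx t ht, hFf s hs t ht, hFf s hs y hy, hFf x hx y hy]
  let T := (Ioo a b ×ˢ Ioo c d) ×ˢ (Ioo a b ×ˢ Ioo c d)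
  have hT : closure T = (Icc a b ×ˢ Icc c d) ×ˢ (Icc a b ×ˢ Icc c d) := by
    simp only [T, closure_prod_eq, closure_Ioo hab.ne, closure_Ioo hcd.ne]
  have hle : ∀ p ∈ T, |mixedDiff F p.1.1 p.1.2 p.2.1 p.2.2| ≤
      M * |p.2.1 - p.1.1| * |p.2.2 - p.1.2| := by
    rintro ⟨⟨x, y⟩, ⟨s, t⟩⟩ ⟨⟨hx, hy⟩, ⟨hs, ht⟩⟩
    rw [hmixed x (Ioo_subset_Icc_self hx) s (Ioo_subset_Icc_self hs) y (Ioo_subset_Icc_self hy)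
      t (Ioo_subset_Icc_self ht)]
    exact h x hx s hs y hy t ht
  rw [← hmixed x hx s hs y hy t ht]
  exact le_on_closure hle (by unfold mixedDiff; fun_prop) (by fun_prop)
    (hT ▸ ⟨⟨hx, hy⟩, ⟨hs, ht⟩⟩ : ((x, y), (s, t)) ∈ closure T)

lemma integral_integral_mixedDiff {F : ℝ → ℝ → ℝ} (hF : Continuous (uncurry F)) (a b c d x y : ℝ) :
    ∫ s in a..b, ∫ t in c..d, mixedDiff F x y s t =
      (∫ s in a..b, ∫ t in c..d, F s t) + (d - c) * (b - a) * F x y -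
        ((b - a) * (∫ t in c..d, F x t) + (d - c) * ∫ s in a..b, F s y) := by
  have hinner : ∀ s, ∫ t in c..d, mixedDiff F x y s t =
      (∫ t in c..d, F s t) - (∫ t in c..d, F x t) - (d - c) * F s y + (d - c) * F x y := by
    intro s
    simp only [mixedDiff]
    rw [intervalIntegral.integral_add, intervalIntegral.integral_sub, intervalIntegral.integral_sub]
    · simp only [intervalIntegral.integral_const, smul_eq_mul]
    all_goals exact Continuous.intervalIntegrable (by fun_prop) _ _
  simp only [hinner]
  rw [intervalIntegral.integral_add, intervalIntegral.integral_sub, intervalIntegral.integral_sub]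
  · simp only [intervalIntegral.integral_const, intervalIntegral.integral_const_mul, smul_eq_mul]
    ring
  all_goals exact Continuous.intervalIntegrable (by fun_prop) _ _

lemma integral_integral_mixedDiff_of_continuousOn {f : ℝ → ℝ → ℝ} {a b c d x y : ℝ} (hab : a ≤ b)
    (hcd : c ≤ d) (hf : ContinuousOn (uncurry f) (Icc a b ×ˢ Icc c d)) (hx : x ∈ Icc a b)
    (hy : y ∈ Icc c d) :
    ∫ s in a..b, ∫ t in c..d, mixedDiff f x y s t =
      (∫ s in a..b, ∫ t in c..d, f s t) + (d - c) * (b - a) * f x y -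
        ((b - a) * (∫ t in c..d, f x t) + (d - c) * ∫ s in a..b, f s y) := by
  obtain ⟨F, hF, hFf⟩ := exists_continuous_eq_on_Icc_prod hab hcd hf
  have hx' : ∀ s ∈ uIcc a b, s ∈ Icc a b := fun s hs => uIcc_of_le hab ▸ hs
  have hy' : ∀ t ∈ uIcc c d, t ∈ Icc c d := fun t ht => uIcc_of_le hcd ▸ ht
  have hinner : ∀ s ∈ uIcc a b, ∫ t in c..d, F s t = ∫ t in c..d, f s t := fun s hs =>
    integral_congr fun t ht => hFf s (hx' s hs) t (hy' t ht)
  have hmixed : ∀ s ∈ uIcc a b, ∫ t in c..d, mixedDiff F x y s t =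
      ∫ t in c..d, mixedDiff f x y s t := fun s hs => integral_congr fun t ht => by
    rw [mixedDiff, mixedDiff, hFf s (hx' s hs) t (hy' t ht), hFf x hx t (hy' t ht),
      hFf s (hx' s hs) y hy, hFf x hx y hy]
  rw [← integral_congr hmixed, integral_integral_mixedDiff hF, integral_congr hinner,
    hinner x (uIcc_of_le hab ▸ hx), hFf x hx y hy,
    integral_congr fun s hs => hFf s (hx' s hs) y hy]

theorem ostrowski_double_barnett_dragomir (a b c d M : ℝ) (hab : a < b) (hcd : c < d)
    (f fx fxy : ℝ → ℝ → ℝ)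
    (hfc : ContinuousOn (fun p : ℝ × ℝ => f p.1 p.2) (Icc a b ×ˢ Icc c d))
    (hfx : ∀ x ∈ Ioo a b, ∀ y ∈ Ioo c d, HasDerivAt (fun t => f t y) (fx x y) x)
    (hfxy : ∀ x ∈ Ioo a b, ∀ y ∈ Ioo c d, HasDerivAt (fun s => fx x s) (fxy x y) y)
    (hM : ∀ x ∈ Ioo a b, ∀ y ∈ Ioo c d, |fxy x y| ≤ M) :
    ∀ x ∈ Icc a b, ∀ y ∈ Icc c d,
      |(∫ s in a..b, ∫ t in c..d, f s t) + (d - c) * (b - a) * f x y -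
          ((b - a) * (∫ t in c..d, f x t) + (d - c) * ∫ s in a..b, f s y)| ≤
        ((b - a) ^ 2 / 4 + (x - (a + b) / 2) ^ 2) *
          ((d - c) ^ 2 / 4 + (y - (c + d) / 2) ^ 2) * M := by
  intro x hx y hy
  rw [← integral_integral_mixedDiff_of_continuousOn hab.le hcd.le hfc hx hy]
  have hbound : ∀ s ∈ Icc a b, ∀ t ∈ Icc c d, |mixedDiff f x y s t| ≤ M * |s - x| * |t - y| :=
    fun s hs t ht => abs_mixedDiff_le_of_continuousOn hab hcd hfc
      (fun _ hx _ hs _ hy _ ht => abs_mixedDiff_le_of_hasDerivAt hfx hfxy hM hx hs hy ht)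
      hx hs hy ht
  calc _ ≤ (∫ s in a..b, M * |s - x|) * ∫ t in c..d, |t - y| :=
        abs_integral_integral_le_mul hab.le hcd.le (Continuous.intervalIntegrable (by fun_prop) _ _)
          (Continuous.intervalIntegrable (by fun_prop) _ _) hbound
    _ = _ := by
        rw [intervalIntegral.integral_const_mul, integral_abs_sub_of_mem_Icc hx,
          integral_abs_sub_of_mem_Icc hy]
        ring
end

section
/- Let [α₁,α₂]⊆[a,b], [β₁,β₂]⊆[c,d] with α₁<α₂, β₁<β₂, w nonnegative integrable with m(α₁,α₂)=∫_{α₁}^{α₂}w and m(β₁,β₂)=∫_{β₁}^{β₂}w, and let f:[a,b]×[c,d]→ℝ be C². Define P(x,t)=∫_{α₁}^t w for α₁≤t<x, P(x,t)=∫_{α₂}^t w for x≤t≤α₂, and Q(y,s) analogously on [β₁,β₂]. Then for (x,y)∈[α₁,α₂]×[β₁,β₂]: f(x,y) = (1/m(α₁,α₂))∫_{α₁}^{α₂}w(t)f(t,y)dt + (1/m(β₁,β₂))∫_{β₁}^{β₂}w(s)f(x,s)ds - (1/(m(α₁,α₂)m(β₁,β₂)))[∫_{α₁}^{α₂}∫_{β₁}^{β₂}w(t)w(s)f(t,s)ds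 dt - ∫_{α₁}^{α₂}∫_{β₁}^{β₂}P(x,t)Q(y,s)·∂²f/∂t∂s(t,s)ds dt]. -/
/-!
Montgomery's identity `∫ P(x,t) g'(t) dt = m g(x) - ∫ w g` is integration by parts for
absolutely continuous functions, done separately on `[α₁, x]` and `[x, α₂]`, where `P(x, ·)` is a
primitive of `w`. Applied in `s` to `fx t`, it turns the inner integral into
`Φ t = ∫ w(s) (fx t y - fx t s) ds`, the derivative of `Ψ t = ∫ w(s) (f t y - f t s) ds`; applied
once more in `t` to `Ψ`, and after expanding `Ψ`, it gives the identity. Only the differences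
`fx t y - fx t s` are ever needed, and these are bounded through `fxy` by the mean value theorem,
whereas `fx` itself need not be bounded.
-/

open Set MeasureTheory intervalIntegral Filter Topology
open scoped NNReal

theorem integral_primitive_mul_deriv {w g : ℝ → ℝ} {a b c : ℝ}
    (hw : IntervalIntegrable w volume a b) (hg : AbsolutelyContinuousOnInterval g a b)
    (hc : c ∈ uIcc a b) :
    ∫ t in a..b, (∫ u in c..t, w u) * deriv g t =
      (∫ u in c..b, w u) * g b - (∫ u in c..a, w u) * g a - ∫ t in a..b, w t * g t := by
  rw [(hw.absolutelyContinuousOnInterval_intervalIntegral hc).integral_mul_deriv_eq_deriv_mul hg]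
  congr 1
  refine integral_congr_ae ?_
  filter_upwards [hw.ae_hasDerivAt_integral] with t ht htI
  rw [(ht (uIoc_subset_uIcc htI) c hc).deriv]

noncomputable def montgomeryKernel (w : ℝ → ℝ) (α₁ α₂ x t : ℝ) : ℝ :=
  if t < x then ∫ u in α₁..t, w u else ∫ u in α₂..t, w u

theorem integral_montgomeryKernel_mul_deriv {w g : ℝ → ℝ} {α₁ α₂ x : ℝ}
    (hw : IntervalIntegrable w volume α₁ α₂) (hg : AbsolutelyContinuousOnInterval g α₁ α₂)
    (hx : x ∈ Icc α₁ α₂) :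
    ∫ t in α₁..α₂, montgomeryKernel w α₁ α₂ x t * deriv g t =
      (∫ u in α₁..α₂, w u) * g x - ∫ t in α₁..α₂, w t * g t := by
  have hsub₁ : uIcc α₁ x ⊆ uIcc α₁ α₂ := uIcc_subset_uIcc_left (mem_uIcc_of_le hx.1 hx.2)
  have hsub₂ : uIcc x α₂ ⊆ uIcc α₁ α₂ := uIcc_subset_uIcc_right (mem_uIcc_of_le hx.1 hx.2)
  have hw₁ := hw.mono_set hsub₁
  have hw₂ := hw.mono_set hsub₂
  have hg₁ := hg.mono hsub₁
  have hg₂ := hg.mono hsub₂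
  have hc₁ : α₁ ∈ uIcc α₁ x := left_mem_uIcc
  have hc₂ : α₂ ∈ uIcc x α₂ := right_mem_uIcc
  have hP₁ : ∀ᵐ t, t ∈ uIoc α₁ x → montgomeryKernel w α₁ α₂ x t * deriv g t =
      (∫ u in α₁..t, w u) * deriv g t := by
    filter_upwards [volume.ae_ne x] with t hne ht
    rw [uIoc_of_le hx.1] at ht
    simp only [montgomeryKernel, if_pos (lt_of_le_of_ne ht.2 hne)]
  have hP₂ : EqOn (fun t => montgomeryKernel w α₁ α₂ x t * deriv g t)
      (fun t => (∫ u in α₂..t, w u) * deriv g t) (uIcc x α₂) := by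
    intro t ht
    rw [uIcc_of_le hx.2] at ht
    simp only [montgomeryKernel, if_neg (not_lt.mpr ht.1)]
  have hi₁ : IntervalIntegrable (fun t => (∫ u in α₁..t, w u) * deriv g t) volume α₁ x :=
    hg₁.intervalIntegrable_deriv.continuousOn_mul
      (hw₁.absolutelyContinuousOnInterval_intervalIntegral hc₁).continuousOn
  have hi₂ : IntervalIntegrable (fun t => (∫ u in α₂..t, w u) * deriv g t) volume x α₂ :=
    hg₂.intervalIntegrable_deriv.continuousOn_mul
      (hw₂.absolutelyContinuousOnInterval_intervalIntegral hc₂).continuousOn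
  have hwg : ∀ {a b}, uIcc a b ⊆ uIcc α₁ α₂ →
      IntervalIntegrable (fun t => w t * g t) volume a b :=
    fun h => (hw.mono_set h).mul_continuousOn (hg.continuousOn.mono h)
  have hW : (∫ u in α₁..x, w u) - ∫ u in α₂..x, w u = ∫ u in α₁..α₂, w u := by
    rw [integral_symm x α₂, ← integral_add_adjacent_intervals hw₁ hw₂]
    ring
  rw [← integral_add_adjacent_intervals (hi₁.congr_ae ?_) (hi₂.congr_ae ?_), integral_congr_ae hP₁,
    integral_congr hP₂, integral_primitive_mul_deriv hw₁ hg₁ hc₁,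
    integral_primitive_mul_deriv hw₂ hg₂ hc₂,
    ← integral_add_adjacent_intervals (hwg hsub₁) (hwg hsub₂), ← hW]
  · simp only [integral_same]
    ring
  · exact Filter.EventuallyEq.symm ((ae_restrict_iff' measurableSet_uIoc).mpr hP₁)
  · exact (ae_restrict_mem measurableSet_uIoc).mono fun t ht => (hP₂ (uIoc_subset_uIcc ht)).symm

theorem integral_montgomeryKernel_mul_of_hasDerivAt {w g g' : ℝ → ℝ} {α₁ α₂ x : ℝ}
    (hw : IntervalIntegrable w volume α₁ α₂) (hg : AbsolutelyContinuousOnInterval g α₁ α₂)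
    (hg' : ∀ t ∈ Ioo α₁ α₂, HasDerivAt g (g' t) t) (hx : x ∈ Icc α₁ α₂) :
    ∫ t in α₁..α₂, montgomeryKernel w α₁ α₂ x t * g' t =
      (∫ u in α₁..α₂, w u) * g x - ∫ t in α₁..α₂, w t * g t := by
  rw [← integral_montgomeryKernel_mul_deriv hw hg hx]
  refine integral_congr_ae ?_
  filter_upwards [volume.ae_ne α₂] with t hne ht
  rw [uIoc_of_le (hx.1.trans hx.2)] at ht
  rw [(hg' t ⟨ht.1, lt_of_le_of_ne ht.2 hne⟩).deriv]

theorem integral_mul_const_sub {w g : ℝ → ℝ} {a b k : ℝ} (hw : IntervalIntegrable w volume a b)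
    (hwg : IntervalIntegrable (fun s => w s * g s) volume a b) :
    ∫ s in a..b, w s * (k - g s) = (∫ s in a..b, w s) * k - ∫ s in a..b, w s * g s := by
  simp only [mul_sub]
  rw [integral_sub (hw.mul_const k) hwg, intervalIntegral.integral_mul_const]

theorem lipschitzOnWith_of_hasDerivAt_of_norm_le {g g' : ℝ → ℝ} {s : Set ℝ} {C : ℝ}
    (hs : Convex ℝ s) (hg : ∀ x ∈ s, HasDerivAt g (g' x) x) (hC : ∀ x ∈ s, ‖g' x‖ ≤ C) :
    LipschitzOnWith (Real.toNNReal C) g s :=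
  hs.lipschitzOnWith_of_nnnorm_hasDerivWithin_le (fun x hx => (hg x hx).hasDerivWithinAt)
    fun x hx => by
      rw [← NNReal.coe_le_coe, coe_nnnorm]
      exact (hC x hx).trans (Real.le_coe_toNNReal C)

theorem integral_montgomeryKernel_mul_eq_integral_mul_sub {w g g' : ℝ → ℝ} {α₁ α₂ x C : ℝ}
    (hw : IntervalIntegrable w volume α₁ α₂) (hg : ∀ t ∈ Icc α₁ α₂, HasDerivAt g (g' t) t)
    (hC : ∀ t ∈ Icc α₁ α₂, ‖g' t‖ ≤ C) (hx : x ∈ Icc α₁ α₂) :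
    ∫ t in α₁..α₂, montgomeryKernel w α₁ α₂ x t * g' t = ∫ t in α₁..α₂, w t * (g x - g t) := by
  have hα : α₁ ≤ α₂ := hx.1.trans hx.2
  have hlip := lipschitzOnWith_of_hasDerivAt_of_norm_le (convex_Icc α₁ α₂) hg hC
  rw [← uIcc_of_le hα] at hlip
  rw [integral_montgomeryKernel_mul_of_hasDerivAt hw hlip.absolutelyContinuousOnInterval
      (fun t ht => hg t (Ioo_subset_Icc_self ht)) hx,
    integral_mul_const_sub hw (hw.mul_continuousOn hlip.continuousOn)]

theorem lipschitzOnWith_integral_mul {w : ℝ → ℝ} {h : ℝ → ℝ → ℝ} {S : Set ℝ} {K : ℝ≥0}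
    {c d : ℝ} (hcd : c ≤ d) (hw : IntervalIntegrable w volume c d)
    (hh : ∀ s ∈ Icc c d, LipschitzOnWith K (fun t => h t s) S)
    (hint : ∀ t ∈ S, IntervalIntegrable (fun s => w s * h t s) volume c d) :
    LipschitzOnWith (K * Real.toNNReal (∫ s in c..d, |w s|)) (fun t => ∫ s in c..d, w s * h t s)
      S := by
  refine LipschitzOnWith.of_dist_le_mul fun t₁ ht₁ t₂ ht₂ => ?_
  have hbound : ∀ s ∈ Ioc c d, ‖w s * h t₁ s - w s * h t₂ s‖ ≤ |w s| * (K * dist t₁ t₂) := by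
    intro s hs
    rw [← mul_sub, norm_mul, Real.norm_eq_abs, ← dist_eq_norm]
    exact mul_le_mul_of_nonneg_left ((hh s (Ioc_subset_Icc_self hs)).dist_le_mul t₁ ht₁ t₂ ht₂)
      (abs_nonneg _)
  calc dist (∫ s in c..d, w s * h t₁ s) (∫ s in c..d, w s * h t₂ s)
      = ‖∫ s in c..d, (w s * h t₁ s - w s * h t₂ s)‖ := by
        rw [dist_eq_norm, integral_sub (hint t₁ ht₁) (hint t₂ ht₂)]
    _ ≤ ∫ s in c..d, |w s| * (K * dist t₁ t₂) :=
        norm_integral_le_of_norm_le hcd (Eventually.of_forall hbound) (hw.abs.mul_const _)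
    _ = ↑(K * Real.toNNReal (∫ s in c..d, |w s|)) * dist t₁ t₂ := by
        rw [intervalIntegral.integral_mul_const, NNReal.coe_mul,
          Real.coe_toNNReal _ (integral_nonneg hcd fun s _ => abs_nonneg (w s))]
        ring

theorem hasDerivAt_integral_mul {w : ℝ → ℝ} {h h' : ℝ → ℝ → ℝ} {U : Set ℝ} {t₀ c d C : ℝ}
    (hU : U ∈ 𝓝 t₀) (hcd : c ≤ d) (hw : IntervalIntegrable w volume c d)
    (hh : ∀ t ∈ U, ∀ s ∈ Icc c d, HasDerivAt (fun t => h t s) (h' t s) t)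
    (hC : ∀ t ∈ U, ∀ s ∈ Icc c d, ‖h' t s‖ ≤ C)
    (hcont : ∀ t ∈ U, ContinuousOn (h t) (Icc c d)) (hcont' : ContinuousOn (h' t₀) (Icc c d)) :
    HasDerivAt (fun t => ∫ s in c..d, w s * h t s) (∫ s in c..d, w s * h' t₀ s) t₀ := by
  have hint : ∀ {g : ℝ → ℝ}, ContinuousOn g (Icc c d) →
      IntervalIntegrable (fun s => w s * g s) volume c d := fun hg =>
    hw.mul_continuousOn (by rwa [uIcc_of_le hcd])
  refine (hasDerivAt_integral_of_dominated_loc_of_deriv_le (F' := fun t s => w s * h' t s)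
    (bound := fun s => |w s| * C) hU
    (eventually_of_mem hU fun t ht => (hint (hcont t ht)).def'.aestronglyMeasurable)
    (hint (hcont t₀ (mem_of_mem_nhds hU))) (hint hcont').def'.aestronglyMeasurable ?_
    (hw.abs.mul_const C) ?_).2
  · refine Eventually.of_forall fun s hs t ht => ?_
    rw [uIoc_of_le hcd] at hs
    rw [norm_mul, Real.norm_eq_abs]
    exact mul_le_mul_of_nonneg_left (hC t ht s (Ioc_subset_Icc_self hs)) (abs_nonneg _)
  · refine Eventually.of_forall fun s hs t ht => ?_
    rw [uIoc_of_le hcd] at hs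
    exact (hh t ht s (Ioc_subset_Icc_self hs)).const_mul (w s)

theorem absolutelyContinuousOnInterval_integral_mul {v : ℝ → ℝ} {h h' : ℝ → ℝ → ℝ}
    {α₁ α₂ β₁ β₂ C : ℝ} (hα : α₁ ≤ α₂) (hβ : β₁ ≤ β₂) (hv : IntervalIntegrable v volume β₁ β₂)
    (hh : ∀ t ∈ Icc α₁ α₂, ∀ s ∈ Icc β₁ β₂, HasDerivAt (fun t => h t s) (h' t s) t)
    (hC : ∀ t ∈ Icc α₁ α₂, ∀ s ∈ Icc β₁ β₂, ‖h' t s‖ ≤ C)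
    (hcont : ∀ t ∈ Icc α₁ α₂, ContinuousOn (h t) (Icc β₁ β₂)) :
    AbsolutelyContinuousOnInterval (fun t => ∫ s in β₁..β₂, v s * h t s) α₁ α₂ := by
  have hlip := lipschitzOnWith_integral_mul hβ hv
    (fun s hs => lipschitzOnWith_of_hasDerivAt_of_norm_le (convex_Icc α₁ α₂)
      (fun t ht => hh t ht s hs) fun t ht => hC t ht s hs)
    fun t ht => hv.mul_continuousOn (by rw [uIcc_of_le hβ]; exact hcont t ht)
  rw [← uIcc_of_le hα] at hlip
  exact hlip.absolutelyContinuousOnInterval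

theorem integral_montgomeryKernel_mul_integral_mul {w v : ℝ → ℝ} {h h' : ℝ → ℝ → ℝ}
    {α₁ α₂ β₁ β₂ C x : ℝ} (hβ : β₁ ≤ β₂) (hw : IntervalIntegrable w volume α₁ α₂)
    (hv : IntervalIntegrable v volume β₁ β₂)
    (hh : ∀ t ∈ Icc α₁ α₂, ∀ s ∈ Icc β₁ β₂, HasDerivAt (fun t => h t s) (h' t s) t)
    (hC : ∀ t ∈ Icc α₁ α₂, ∀ s ∈ Icc β₁ β₂, ‖h' t s‖ ≤ C)
    (hcont : ∀ t ∈ Icc α₁ α₂, ContinuousOn (h t) (Icc β₁ β₂))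
    (hcont' : ∀ t ∈ Icc α₁ α₂, ContinuousOn (h' t) (Icc β₁ β₂)) (hx : x ∈ Icc α₁ α₂) :
    ∫ t in α₁..α₂, montgomeryKernel w α₁ α₂ x t * ∫ s in β₁..β₂, v s * h' t s =
      (∫ u in α₁..α₂, w u) * (∫ s in β₁..β₂, v s * h x s) -
        ∫ t in α₁..α₂, w t * ∫ s in β₁..β₂, v s * h t s := by
  have hIoo : Ioo α₁ α₂ ⊆ Icc α₁ α₂ := Ioo_subset_Icc_self
  refine integral_montgomeryKernel_mul_of_hasDerivAt hw
    (absolutelyContinuousOnInterval_integral_mul (hx.1.trans hx.2) hβ hv hh hC hcont)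
    (fun t ht => ?_) hx
  exact hasDerivAt_integral_mul (isOpen_Ioo.mem_nhds ht) hβ hv (fun t ht => hh t (hIoo ht))
    (fun t ht => hC t (hIoo ht)) (fun t ht => hcont t (hIoo ht)) (hcont' t (hIoo ht))

theorem integral_integral_montgomeryKernel_mul_mul {α₁ α₂ β₁ β₂ M x y : ℝ} {w : ℝ → ℝ}
    {f fx fxy : ℝ → ℝ → ℝ}
    (hwα : IntervalIntegrable w volume α₁ α₂) (hwβ : IntervalIntegrable w volume β₁ β₂)
    (hf : ∀ t ∈ Icc α₁ α₂, ContinuousOn (f t) (Icc β₁ β₂))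
    (hfx : ∀ t ∈ Icc α₁ α₂, ∀ s ∈ Icc β₁ β₂, HasDerivAt (fun t => f t s) (fx t s) t)
    (hfxy : ∀ t ∈ Icc α₁ α₂, ∀ s ∈ Icc β₁ β₂, HasDerivAt (fx t) (fxy t s) s)
    (hM : ∀ t ∈ Icc α₁ α₂, ∀ s ∈ Icc β₁ β₂, ‖fxy t s‖ ≤ M)
    (hx : x ∈ Icc α₁ α₂) (hy : y ∈ Icc β₁ β₂) :
    ∫ t in α₁..α₂, ∫ s in β₁..β₂,
        montgomeryKernel w α₁ α₂ x t * montgomeryKernel w β₁ β₂ y s * fxy t s =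
      (∫ u in α₁..α₂, w u) * ((∫ u in β₁..β₂, w u) * f x y - ∫ s in β₁..β₂, w s * f x s) -
        ((∫ u in β₁..β₂, w u) * (∫ t in α₁..α₂, w t * f t y) -
          ∫ t in α₁..α₂, ∫ s in β₁..β₂, w t * w s * f t s) := by
  have hα : α₁ ≤ α₂ := hx.1.trans hx.2
  have hβ : β₁ ≤ β₂ := hy.1.trans hy.2
  have hfx_sub : ∀ t ∈ Icc α₁ α₂, ∀ s ∈ Icc β₁ β₂, ‖fx t y - fx t s‖ ≤ M * (β₂ - β₁) := by
    intro t ht s hs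
    have hM0 : 0 ≤ M := (norm_nonneg _).trans (hM t ht s hs)
    calc ‖fx t y - fx t s‖ ≤ M * ‖y - s‖ :=
          (convex_Icc β₁ β₂).norm_image_sub_le_of_norm_hasDerivWithin_le
            (fun u hu => (hfxy t ht u hu).hasDerivWithinAt) (hM t ht) hs hy
      _ ≤ M * (β₂ - β₁) := mul_le_mul_of_nonneg_left (Real.dist_le_of_mem_Icc hy hs) hM0
  have hdiff : ∀ t ∈ Icc α₁ α₂, ∀ s ∈ Icc β₁ β₂,
      HasDerivAt (fun t => f t y - f t s) (fx t y - fx t s) t :=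
    fun t ht s hs => (hfx t ht y hy).sub (hfx t ht s hs)
  have hcont : ∀ t ∈ Icc α₁ α₂, ContinuousOn (fun s => f t y - f t s) (Icc β₁ β₂) :=
    fun t ht => continuousOn_const.sub (hf t ht)
  have hcont' : ∀ t ∈ Icc α₁ α₂, ContinuousOn (fun s => fx t y - fx t s) (Icc β₁ β₂) :=
    fun t ht => continuousOn_const.sub fun s hs => (hfxy t ht s hs).continuousAt.continuousWithinAt
  have hΨ_eq : ∀ t ∈ Icc α₁ α₂, ∫ s in β₁..β₂, w s * (f t y - f t s) =
      (∫ u in β₁..β₂, w u) * f t y - ∫ s in β₁..β₂, w s * f t s :=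
    fun t ht => integral_mul_const_sub hwβ
      (hwβ.mul_continuousOn (by rw [uIcc_of_le hβ]; exact hf t ht))
  have hΨ_int : IntervalIntegrable (fun t => w t * ∫ s in β₁..β₂, w s * (f t y - f t s))
      volume α₁ α₂ :=
    hwα.mul_continuousOn
      (absolutelyContinuousOnInterval_integral_mul hα hβ hwβ hdiff hfx_sub hcont).continuousOn
  have hfy_int : IntervalIntegrable (fun t => w t * f t y) volume α₁ α₂ :=
    hwα.mul_continuousOn fun t ht =>
      (hfx t (uIcc_of_le hα ▸ ht) y hy).continuousAt.continuousWithinAt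
  have houter : ∫ t in α₁..α₂, ∫ s in β₁..β₂, w t * w s * f t s =
      (∫ u in β₁..β₂, w u) * (∫ t in α₁..α₂, w t * f t y) -
        ∫ t in α₁..α₂, w t * ∫ s in β₁..β₂, w s * (f t y - f t s) := by
    rw [← intervalIntegral.integral_const_mul, ← integral_sub (hfy_int.const_mul _) hΨ_int]
    refine integral_congr fun t ht => ?_
    rw [uIcc_of_le hα] at ht
    simp only [mul_assoc, intervalIntegral.integral_const_mul, hΨ_eq t ht]
    ring
  calc ∫ t in α₁..α₂, ∫ s in β₁..β₂,
        montgomeryKernel w α₁ α₂ x t * montgomeryKernel w β₁ β₂ y s * fxy t s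
      = ∫ t in α₁..α₂, montgomeryKernel w α₁ α₂ x t *
          ∫ s in β₁..β₂, w s * (fx t y - fx t s) := by
        refine integral_congr fun t ht => ?_
        rw [uIcc_of_le hα] at ht
        simp only [mul_assoc, intervalIntegral.integral_const_mul,
          integral_montgomeryKernel_mul_eq_integral_mul_sub hwβ (hfxy t ht) (hM t ht) hy]
    _ = _ := by
        rw [integral_montgomeryKernel_mul_integral_mul hβ hwα hwβ hdiff hfx_sub hcont hcont' hx,
          hΨ_eq x hx, houter]
        ring

theorem weighted_ostrowski_subinterval_lemma_general (a b c d α₁ α₂ β₁ β₂ : ℝ)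
    (ha₁ : a ≤ α₁) (hα : α₁ < α₂) (hα₂ : α₂ ≤ b)
    (hb₁ : c ≤ β₁) (hβ : β₁ < β₂) (hβ₂ : β₂ ≤ d)
    (w : ℝ → ℝ)
    (hwab : IntervalIntegrable w volume a b)
    (hwcd : IntervalIntegrable w volume c d)
    (hmα : 0 < ∫ u in α₁..α₂, w u) (hmβ : 0 < ∫ u in β₁..β₂, w u)
    (f fx fxy : ℝ → ℝ → ℝ)
    (hfc : ContinuousOn (fun p : ℝ × ℝ => f p.1 p.2) (Icc a b ×ˢ Icc c d))
    (hfx : ∀ x ∈ Icc a b, ∀ y ∈ Icc c d, HasDerivAt (fun t => f t y) (fx x y) x)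
    (hfxy : ∀ x ∈ Icc a b, ∀ y ∈ Icc c d, HasDerivAt (fun s => fx x s) (fxy x y) y)
    (hfxyc : ContinuousOn (fun p : ℝ × ℝ => fxy p.1 p.2) (Icc a b ×ˢ Icc c d)) :
    ∀ x ∈ Icc α₁ α₂, ∀ y ∈ Icc β₁ β₂,
      f x y =
        (1 / ∫ u in α₁..α₂, w u) * (∫ t in α₁..α₂, w t * f t y) +
        (1 / ∫ u in β₁..β₂, w u) * (∫ s in β₁..β₂, w s * f x s) -
        (1 / ((∫ u in α₁..α₂, w u) * ∫ u in β₁..β₂, w u)) *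
          ((∫ t in α₁..α₂, ∫ s in β₁..β₂, w t * w s * f t s) -
            ∫ t in α₁..α₂, ∫ s in β₁..β₂,
              (if t < x then ∫ u in α₁..t, w u else ∫ u in α₂..t, w u) *
                (if s < y then ∫ u in β₁..s, w u else ∫ u in β₂..s, w u) * fxy t s) := by
  intro x hx y hy
  have hI : Icc α₁ α₂ ⊆ Icc a b := Icc_subset_Icc ha₁ hα₂
  have hJ : Icc β₁ β₂ ⊆ Icc c d := Icc_subset_Icc hb₁ hβ₂
  obtain ⟨M, hM⟩ := (isCompact_Icc.prod isCompact_Icc).exists_bound_of_continuousOn hfxyc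
  have key := integral_integral_montgomeryKernel_mul_mul (f := f)
    (hwab.mono_set (uIcc_subset_uIcc (mem_uIcc_of_le ha₁ (hα.le.trans hα₂))
      (mem_uIcc_of_le (ha₁.trans hα.le) hα₂)))
    (hwcd.mono_set (uIcc_subset_uIcc (mem_uIcc_of_le hb₁ (hβ.le.trans hβ₂))
      (mem_uIcc_of_le (hb₁.trans hβ.le) hβ₂)))
    (fun t ht => hfc.comp (continuousOn_const.prodMk continuousOn_id) fun s hs => ⟨hI ht, hJ hs⟩)
    (fun t ht s hs => hfx t (hI ht) s (hJ hs)) (fun t ht s hs => hfxy t (hI ht) s (hJ hs))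
    (fun t ht s hs => hM (t, s) ⟨hI ht, hJ hs⟩) hx hy
  simp only [montgomeryKernel] at key
  rw [key]
  field_simp
  ring

theorem weighted_ostrowski_subinterval_lemma (a b c d α₁ α₂ β₁ β₂ : ℝ)
    (ha₁ : a ≤ α₁) (hα : α₁ < α₂) (hα₂ : α₂ ≤ b)
    (hb₁ : c ≤ β₁) (hβ : β₁ < β₂) (hβ₂ : β₂ ≤ d)
    (w : ℝ → ℝ) (hw0 : ∀ u ∈ Icc a b ∪ Icc c d, 0 ≤ w u)
    (hwab : IntervalIntegrable w volume a b)
    (hwcd : IntervalIntegrable w volume c d)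
    (hmα : 0 < ∫ u in α₁..α₂, w u) (hmβ : 0 < ∫ u in β₁..β₂, w u)
    (f fx fxy : ℝ → ℝ → ℝ)
    (hfc : ContinuousOn (fun p : ℝ × ℝ => f p.1 p.2) (Icc a b ×ˢ Icc c d))
    (hfx : ∀ x ∈ Icc a b, ∀ y ∈ Icc c d, HasDerivAt (fun t => f t y) (fx x y) x)
    (hfxy : ∀ x ∈ Icc a b, ∀ y ∈ Icc c d, HasDerivAt (fun s => fx x s) (fxy x y) y)
    (hfxyc : ContinuousOn (fun p : ℝ × ℝ => fxy p.1 p.2) (Icc a b ×ˢ Icc c d)) :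
    ∀ x ∈ Icc α₁ α₂, ∀ y ∈ Icc β₁ β₂,
      f x y =
        (1 / ∫ u in α₁..α₂, w u) * (∫ t in α₁..α₂, w t * f t y) +
        (1 / ∫ u in β₁..β₂, w u) * (∫ s in β₁..β₂, w s * f x s) -
        (1 / ((∫ u in α₁..α₂, w u) * ∫ u in β₁..β₂, w u)) *
          ((∫ t in α₁..α₂, ∫ s in β₁..β₂, w t * w s * f t s) -
            ∫ t in α₁..α₂, ∫ s in β₁..β₂,
              (if t < x then ∫ u in α₁..t, w u else ∫ u in α₂..t, w u) *
                (if s < y then ∫ u in β₁..s, w u else ∫ u in β₂..s, w u) * fxy t s) :=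
  weighted_ostrowski_subinterval_lemma_general a b c d α₁ α₂ β₁ β₂ ha₁ hα hα₂ hb₁ hβ hβ₂ w hwab hwcd
    hmα hmβ f fx fxy hfc hfx hfxy hfxyc
end
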